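/- arXiv:1704.00007 — 2 statements merged into one kernel-verified Lean document; each statement's English description precedes it below -/
import Mathlib

section
/- Define the period k(n) of an integer n ≥ 3 as the least k ≥ 1 such that the k-fold iterate of the divisor function d applied to n equals 2. Then for every positive integer m, there exists n ≥ 3 with k(n) = m; i.e., the period is unbounded. -/
/-- The number-of-divisors function. -/
def d (n : ℕ) : ℕ := n.divisors.card

/-- The period of `n`: the least `k ≥ 1` with `d^[k] n = 2`. -/
noncomputable def period (n : ℕ) : ℕ := sInf {k | 1 ≤ k ∧ d^[k] n = 2}

lemma d_two_pow (n : ℕ) : d (2 ^ n) = n + 1 := by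
  have h := Nat.divisors_prime_pow Nat.prime_two n
  simp [d, h]

lemma key (m : ℕ) (hm : 1 ≤ m) :
    ∃ n, (∀ k < m, 3 ≤ d^[k] n) ∧ d^[m] n = 2 := by
  induction m with
  | zero => omega
  | succ m ih =>
    rcases Nat.eq_zero_or_pos m with h | h
    · subst h
      exact ⟨3, by intro k hk; interval_cases k; decide, by decide⟩
    · obtain ⟨n, h1, h2⟩ := ih h
      have hn3 : 3 ≤ n := by simpa using h1 0 h
      have hd : d (2 ^ (n - 1)) = n := by rw [d_two_pow]; omega
      refine ⟨2 ^ (n - 1), ?_, ?_⟩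
      · intro k hk
        cases k with
        | zero =>
          simp only [Function.iterate_zero, id]
          calc 3 ≤ 2 ^ 2 := by norm_num
            _ ≤ 2 ^ (n - 1) := Nat.pow_le_pow_right (by norm_num) (by omega)
        | succ k =>
          rw [Function.iterate_succ_apply, hd]
          exact h1 k (by omega)
      · rw [Function.iterate_succ_apply, hd]
        exact h2

theorem period_unbounded (m : ℕ) (hm : 1 ≤ m) :
    ∃ n : ℕ, 3 ≤ n ∧ period n = m := by
  obtain ⟨n, h1, h2⟩ := key m hm
  have hn3 : 3 ≤ n := by simpa using h1 0 hm
  refine ⟨n, hn3, ?_⟩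
  have hmem : m ∈ {k | 1 ≤ k ∧ d^[k] n = 2} := ⟨hm, h2⟩
  apply le_antisymm (Nat.sInf_le hmem)
  apply le_csInf ⟨m, hmem⟩
  rintro k ⟨hk1, hk2⟩
  by_contra hlt
  push_neg at hlt
  have := h1 k hlt
  omega
end

section
/- The number 5040 is the smallest positive integer whose period is exactly 6, where the period of n is the least k such that d^k(n) = 2. -/
/-!
If `period n = 6` then `d n` has period 5, and a finite check shows that no number below 60 has
period 5, so `d n ≥ 60`. Every `n < 5040` has fewer than 60 divisors: the divisors pair off as
`k ↔ n / k`, one member of each pair is at most 70 because `n < 71²`, and a kernel computation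
shows that no `n < 5040` has 30 divisors in `[1, 70]`. Finally `5040 ↦ 60 ↦ 12 ↦ 6 ↦ 4 ↦ 3 ↦ 2`.
-/

open Finset

/-- `#{k ∈ Icc 1 B | k ∣ n}`, written with the kernel's primitive `Nat` operations so that
`decide +kernel` evaluates it quickly. -/
def countDivisorsUpTo (n : ℕ) : ℕ → ℕ :=
  Nat.rec 0 fun k acc => Nat.add acc (cond (Nat.beq (Nat.mod n (k + 1)) 0) 1 0)

theorem countDivisorsUpTo_eq (n B : ℕ) : countDivisorsUpTo n B = #{k ∈ Icc 1 B | k ∣ n} := by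
  induction B with
  | zero => rfl
  | succ B ih =>
    have hstep : cond (Nat.beq (n % (B + 1)) 0) 1 0 = if B + 1 ∣ n then 1 else 0 := by
      simp [Nat.dvd_iff_mod_eq_zero, cond_eq_ite]
    change countDivisorsUpTo n B + cond (Nat.beq (n % (B + 1)) 0) 1 0 = _
    rw [ih, hstep, ← insert_Icc_right_eq_Icc_add_one (by omega), filter_insert]
    split_ifs <;> simp

theorem card_divisors_le_two_mul_card_filter_dvd {n B : ℕ} (hn : n < (B + 1) ^ 2) :
    #n.divisors ≤ 2 * #{k ∈ Icc 1 B | k ∣ n} := by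
  set S := {k ∈ Icc 1 B | k ∣ n}
  have hsub : n.divisors ⊆ S ∪ S.image (n / ·) := by
    intro k hk
    obtain ⟨hkn, hn0⟩ := Nat.mem_divisors.1 hk
    have hk0 : 0 < k := Nat.pos_of_dvd_of_pos hkn (Nat.pos_of_ne_zero hn0)
    by_cases hkB : k ≤ B
    · exact mem_union_left _ (by simp [S, hkn, hkB, hk0.ne', Nat.one_le_iff_ne_zero])
    · refine mem_union_right _ (mem_image.2 ⟨n / k, ?_, Nat.div_div_self hkn hn0⟩)
      have hq0 : 0 < n / k := Nat.div_pos (Nat.le_of_dvd (by omega) hkn) hk0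
      have hqB : n / k < B + 1 := (Nat.div_lt_iff_lt_mul hk0).2 (by nlinarith)
      simp only [S, mem_filter, mem_Icc]
      exact ⟨⟨hq0, by omega⟩, Nat.div_dvd_of_dvd hkn⟩
  calc #n.divisors ≤ #(S ∪ S.image (n / ·)) := card_le_card hsub
    _ ≤ #S + #S := (card_union_le _ _).trans (Nat.add_le_add_left card_image_le _)
    _ = 2 * #S := (two_mul _).symm

theorem countDivisorsUpTo_seventy_lt_thirty {n : ℕ} (hn : n < 5040) (hpos : 0 < n) :
    countDivisorsUpTo n 70 < 30 := by
  -- A scan over `List.range` keeps the kernel's work linear in the length of the range.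
  have hscan : (List.range 5040).all (fun m => m == 0 || countDivisorsUpTo m 70 < 30) := by
    decide +kernel
  simpa [hpos.ne'] using List.all_eq_true.1 hscan n (List.mem_range.2 hn)

theorem d_lt_sixty {n : ℕ} (hn : n < 5040) : d n < 60 := by
  rcases Nat.eq_zero_or_pos n with rfl | hpos
  · decide
  have h := countDivisorsUpTo_seventy_lt_thirty hn hpos
  rw [countDivisorsUpTo_eq] at h
  have := card_divisors_le_two_mul_card_filter_dvd (n := n) (B := 70) (by omega)
  unfold d
  omega

theorem d_two : d 2 = 2 := by decide

theorem iterate_d_eq_two_of_le {n j k : ℕ} (hjk : j ≤ k) (h : d^[j] n = 2) : d^[k] n = 2 := by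
  obtain ⟨i, rfl⟩ := Nat.exists_eq_add_of_le hjk
  rw [add_comm, Function.iterate_add_apply, h, Function.iterate_fixed d_two]

theorem period_eq_succ_iff {n k : ℕ} (hk : 1 ≤ k) :
    period n = k + 1 ↔ d^[k + 1] n = 2 ∧ d^[k] n ≠ 2 := by
  constructor
  · intro h
    have hne : {k | 1 ≤ k ∧ d^[k] n = 2}.Nonempty :=
      Nat.nonempty_of_pos_sInf (show 0 < period n by omega)
    refine ⟨(h ▸ Nat.sInf_mem hne : 1 ≤ k + 1 ∧ _).2, fun hk2 => ?_⟩
    exact Nat.notMem_of_lt_sInf (show k < period n by omega) ⟨hk, hk2⟩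
  · rintro ⟨hsucc, hk2⟩
    refine IsLeast.csInf_eq ⟨⟨by omega, hsucc⟩, fun j ⟨hj, hj2⟩ => ?_⟩
    by_contra! hjk
    exact hk2 (iterate_d_eq_two_of_le (by omega) hj2)

theorem period_d_of_period_eq {n k : ℕ} (hk : 1 ≤ k) (h : period n = k + 2) :
    period (d n) = k + 1 := by
  obtain ⟨hsucc, hk2⟩ := (period_eq_succ_iff (k := k + 1) (by omega)).1 h
  rw [Function.iterate_succ_apply] at hsucc hk2
  exact (period_eq_succ_iff hk).2 ⟨hsucc, hk2⟩

theorem period_ne_five_of_lt_sixty {m : ℕ} (hm : m < 60) : period m ≠ 5 := by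
  have hsmall : ∀ m < 60, d^[5] m = 2 → d^[4] m = 2 := by decide
  intro h
  obtain ⟨h5, h4⟩ := (period_eq_succ_iff (k := 4) (by norm_num)).1 h
  exact h4 (hsmall m hm h5)

theorem d_5040 : d 5040 = 60 := by decide +kernel

set_option maxRecDepth 10000 in
theorem iterate_d_5040 : d^[5] 5040 = 3 := by
  rw [Function.iterate_succ_apply, d_5040]
  decide

theorem fiveThousandForty_least_period_six :
    IsLeast {n : ℕ | 0 < n ∧ period n = 6} 5040 := by
  refine ⟨⟨by norm_num, (period_eq_succ_iff (k := 5) (by norm_num)).2 ?_⟩, ?_⟩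
  · rw [Function.iterate_succ_apply', iterate_d_5040]
    decide
  · rintro n ⟨-, hn⟩
    by_contra! hlt
    exact period_ne_five_of_lt_sixty (d_lt_sixty hlt)
      (period_d_of_period_eq (k := 4) (by norm_num) hn)
end
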